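/- arXiv:2404.10884 — 9 statements merged into one kernel-verified Lean document; each statement's English description precedes it below -/
import Mathlib

section
/- Let N(A,B,ℓ) and N(A',B',ℓ) be two uniform-block matrices with the same block size vector ℓ = (L_1,...,L_G) and with L = diag(L_1,...,L_G). Then their product N(A,B,ℓ)·N(A',B',ℓ) is again a uniform-block matrix N(A'',B'',ℓ) with A'' = A A' and B'' = A B' + B A' + B L B'. -/
open Matrix BigOperators

/-- The uniform-block matrix `N(A, B, ℓ) = A ∘ I(ℓ) + B ∘ J(ℓ)`. -/
def UB (G : ℕ) (L : Fin G → ℕ) (a : Fin G → ℝ) (B : Matrix (Fin G) (Fin G) ℝ) :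
    Matrix ((g : Fin G) × Fin (L g)) ((g : Fin G) × Fin (L g)) ℝ :=
  Matrix.of fun i j => (if i = j then a i.1 else 0) + B i.1 j.1

/-- The product of two uniform-block matrices with the same block-size vector `ℓ` is
again a uniform-block matrix, with `A'' = A A'` and `B'' = A B' + B A' + B L B'`,
where `L = diag(L_1, …, L_G)`. -/
theorem UB_mul (G : ℕ) (L : Fin G → ℕ)
    (a a' : Fin G → ℝ) (B B' : Matrix (Fin G) (Fin G) ℝ) :
    UB G L a B * UB G L a' B' =
      UB G L (a * a')
        (Matrix.diagonal a * B' + B * Matrix.diagonal a' +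
          B * Matrix.diagonal (fun g => (L g : ℝ)) * B') := by
  ext i j
  simp only [UB, Matrix.mul_apply, Matrix.of_apply, add_mul, mul_add,
    Finset.sum_add_distrib, Matrix.add_apply, Pi.mul_apply,
    Matrix.diagonal_apply]
  have h1 : ∑ k : (g : Fin G) × Fin (L g),
      (if i = k then a i.1 else 0) * (if k = j then a' k.1 else 0)
      = if i = j then a i.1 * a' i.1 else 0 := by
    rw [Finset.sum_eq_single i]
    · simp
    · intro b _ hb
      simp [Ne.symm hb]
    · simp
  have h2 : ∑ k : (g : Fin G) × Fin (L g),
      (if i = k then a i.1 else 0) * B' k.1 j.1 = a i.1 * B' i.1 j.1 := by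
    rw [Finset.sum_eq_single i]
    · simp
    · intro b _ hb; simp [Ne.symm hb]
    · simp
  have h3 : ∑ k : (g : Fin G) × Fin (L g),
      B i.1 k.1 * (if k = j then a' k.1 else 0) = B i.1 j.1 * a' j.1 := by
    rw [Finset.sum_eq_single j]
    · simp
    · intro b _ hb; simp [hb]
    · simp
  have h4 : ∑ k : (g : Fin G) × Fin (L g), B i.1 k.1 * B' k.1 j.1
      = ∑ m : Fin G, B i.1 m * (L m : ℝ) * B' m j.1 := by
    rw [← Finset.univ_sigma_univ, Finset.sum_sigma]
    simp only [Finset.sum_const, nsmul_eq_mul, Finset.card_univ, Fintype.card_fin]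
    apply Finset.sum_congr rfl; intro m _; ring
  rw [h1, h2, h3, h4]
  simp [Matrix.mul_apply, Matrix.diagonal_apply, Finset.mul_sum,
    Finset.sum_ite_eq, Finset.sum_ite_eq']
  ring_nf
end

section
/- Let N = N(A,B,ℓ) be a uniform-block matrix with A = diag(a_1,...,a_G) invertible and Δ = A + B L invertible, where L = diag(L_1,...,L_G). Then N is invertible and its inverse is the uniform-block matrix N(A*,B*,ℓ) with A* = A^{-1} and B* = -Δ^{-1} B A^{-1}. -/
open Matrix BigOperators

/-- If `A = diag(a_1, …, a_G)` is invertible and `Δ = A + B L` is invertible (with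
`L = diag(L_1, …, L_G)`), then the uniform-block matrix `N(A, B, ℓ)` is invertible and
its inverse is the uniform-block matrix `N(A*, B*, ℓ)` with `A* = A⁻¹` and
`B* = -Δ⁻¹ B A⁻¹`. -/
theorem UB_inv (G : ℕ) (L : Fin G → ℕ) (hL : ∀ g, 0 < L g)
    (a : Fin G → ℝ) (B : Matrix (Fin G) (Fin G) ℝ) (hB : B.IsSymm)
    (ha : ∀ g, a g ≠ 0)
    (hΔ : IsUnit (Matrix.diagonal a + B * Matrix.diagonal (fun g => (L g : ℝ))).det) :
    IsUnit (UB G L a B).det ∧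
    (UB G L a B)⁻¹ =
      UB G L (fun g => (a g)⁻¹)
        (-((Matrix.diagonal a + B * Matrix.diagonal (fun g => (L g : ℝ)))⁻¹ * B *
            (Matrix.diagonal a)⁻¹)) := by
  set Δ : Matrix (Fin G) (Fin G) ℝ :=
    Matrix.diagonal a + B * Matrix.diagonal (fun g => (L g : ℝ)) with hΔdef
  set B' : Matrix (Fin G) (Fin G) ℝ := -(Δ⁻¹ * B * (Matrix.diagonal a)⁻¹) with hB'def
  have hdiaginv : (Matrix.diagonal a)⁻¹ = Matrix.diagonal (fun g => (a g)⁻¹) := by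
    refine Matrix.inv_eq_right_inv ?_
    rw [Matrix.diagonal_mul_diagonal]
    have : (fun g => a g * (a g)⁻¹) = fun _ => (1 : ℝ) :=
      funext fun g => mul_inv_cancel₀ (ha g)
    rw [this, Matrix.diagonal_one]
  have h1 : Δ * B' = -(B * Matrix.diagonal (fun g => (a g)⁻¹)) := by
    rw [hB'def, hdiaginv, Matrix.mul_neg, ← Matrix.mul_assoc, ← Matrix.mul_assoc,
      Matrix.mul_nonsing_inv _ hΔ, Matrix.one_mul]
  have hkey : Matrix.diagonal a * B' + B * Matrix.diagonal (fun g => (a g)⁻¹)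
      + B * Matrix.diagonal (fun g => (L g : ℝ)) * B' = 0 := by
    have h2 : Matrix.diagonal a * B' + B * Matrix.diagonal (fun g => (L g : ℝ)) * B'
        = -(B * Matrix.diagonal (fun g => (a g)⁻¹)) := by
      rw [← Matrix.add_mul, ← hΔdef, h1]
    rw [add_right_comm, h2, neg_add_cancel]
  have hkey' : ∀ g h, a g * B' g h + B g h * (a h)⁻¹
      + ∑ k, B g k * (L k : ℝ) * B' k h = 0 := by
    intro g h
    have := congrFun (congrFun hkey g) h
    simpa [Matrix.mul_apply, Matrix.add_apply, Matrix.diagonal_apply, ite_mul,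
      mul_ite, mul_zero, zero_mul, Finset.sum_ite_eq, Finset.sum_ite_eq'] using this
  have hmul : UB G L a B * UB G L (fun g => (a g)⁻¹) B' = 1 := by
    ext i j
    simp only [Matrix.mul_apply, UB, Matrix.of_apply, Matrix.one_apply]
    have expand : ∀ k : (Σ g : Fin G, Fin (L g)),
        ((if i = k then a i.1 else 0) + B i.1 k.1) *
          ((if k = j then (a k.1)⁻¹ else 0) + B' k.1 j.1) =
        ((if i = k then (if k = j then a i.1 * (a k.1)⁻¹ else 0) else 0)
          + (if i = k then a i.1 * B' k.1 j.1 else 0))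
          + ((if k = j then B i.1 k.1 * (a k.1)⁻¹ else 0)
          + B i.1 k.1 * B' k.1 j.1) := by
      intro k
      split_ifs <;> ring
    rw [Finset.sum_congr rfl (fun k _ => expand k)]
    rw [Finset.sum_add_distrib, Finset.sum_add_distrib, Finset.sum_add_distrib]
    have s1 : ∑ k : (Σ g : Fin G, Fin (L g)),
        (if i = k then (if k = j then a i.1 * (a k.1)⁻¹ else 0) else 0)
        = if i = j then 1 else 0 := by
      rw [Finset.sum_ite_eq]
      simp only [Finset.mem_univ, if_true]
      by_cases h : i = j
      · subst h; simp [mul_inv_cancel₀ (ha i.1)]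
      · simp [h]
    have s2 : ∑ k : (Σ g : Fin G, Fin (L g)),
        (if i = k then a i.1 * B' k.1 j.1 else 0) = a i.1 * B' i.1 j.1 := by
      rw [Finset.sum_ite_eq]
      simp
    have s3 : ∑ k : (Σ g : Fin G, Fin (L g)),
        (if k = j then B i.1 k.1 * (a k.1)⁻¹ else 0) = B i.1 j.1 * (a j.1)⁻¹ := by
      rw [Finset.sum_ite_eq']
      simp
    have s4 : ∑ k : (Σ g : Fin G, Fin (L g)), B i.1 k.1 * B' k.1 j.1
        = ∑ g, B i.1 g * (L g : ℝ) * B' g j.1 := by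
      have : (Finset.univ : Finset (Σ g : Fin G, Fin (L g)))
          = Finset.univ.sigma (fun g => (Finset.univ : Finset (Fin (L g)))) := rfl
      rw [this, Finset.sum_sigma]
      refine Finset.sum_congr rfl fun g _ => ?_
      have hs : ∀ s : Fin (L g), B i.fst ((⟨g, s⟩ : (g : Fin G) × Fin (L g))).fst * B' ((⟨g, s⟩ : (g : Fin G) × Fin (L g))).fst j.fst
          = B i.fst g * B' g j.fst := fun s => rfl
      rw [Finset.sum_congr rfl fun s _ => hs s, Finset.sum_const, Finset.card_univ,
        Fintype.card_fin, nsmul_eq_mul]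
      ring
    rw [s1, s2, s3, s4]
    have := hkey' i.1 j.1
    linarith [this]
  exact ⟨Matrix.isUnit_det_of_right_inverse hmul, Matrix.inv_eq_right_inv hmul⟩
end

section
/- Let N = N(A,B,ℓ) be a uniform-block matrix with A = diag(a_1,...,a_G), B = (b_{gg'}) symmetric, and L = diag(L_1,...,L_G). Then det(N) = (∏_{g=1}^G a_g^{L_g - 1}) · det(A + B L). -/
open Matrix BigOperators

section aux

variable (G : ℕ) (L : Fin G → ℕ)

private def Umat : Matrix ((g : Fin G) × Fin (L g)) (Fin G) ℝ :=
  Matrix.of fun i g => if i.1 = g then 1 else 0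

private def Vmat : Matrix (Fin G) ((g : Fin G) × Fin (L g)) ℝ :=
  Matrix.of fun g i => if i.1 = g then 1 else 0

private lemma UB_decomp (a : Fin G → ℝ) (B : Matrix (Fin G) (Fin G) ℝ) :
    UB G L a B = Matrix.diagonal (fun i => a i.1) + Umat G L * B * Vmat G L := by
  ext i j
  simp [UB, Umat, Vmat, Matrix.mul_apply, Matrix.diagonal, Finset.mul_sum]

private lemma VDU (a : Fin G → ℝ) :
    Vmat G L * Matrix.diagonal (fun i : (g : Fin G) × Fin (L g) => (a i.1)⁻¹) * Umat G L
      = Matrix.diagonal (fun g => (L g : ℝ) * (a g)⁻¹) := by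
  ext g g'
  rw [Matrix.mul_apply]
  simp only [Vmat, Umat, Matrix.mul_diagonal, Matrix.of_apply, Matrix.diagonal_apply,
    ← Finset.univ_sigma_univ, Finset.sum_sigma]
  rcases eq_or_ne g g' with rfl | h
  · simp [Finset.sum_ite_eq, mul_comm]
  · simp [Finset.sum_ite_eq, h, Ne.symm h]

private lemma UB_det_aux (hL : ∀ g, 0 < L g)
    (a : Fin G → ℝ) (B : Matrix (Fin G) (Fin G) ℝ) (hB : B.IsSymm)
    (ha : ∀ g, a g ≠ 0) :
    (UB G L a B).det =
      (∏ g, a g ^ (L g - 1)) *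
        (Matrix.diagonal a + B * Matrix.diagonal (fun g => (L g : ℝ))).det := by
  classical
  set D : Matrix ((g : Fin G) × Fin (L g)) ((g : Fin G) × Fin (L g)) ℝ :=
    Matrix.diagonal (fun i => a i.1) with hD
  set D' : Matrix ((g : Fin G) × Fin (L g)) ((g : Fin G) × Fin (L g)) ℝ :=
    Matrix.diagonal (fun i => (a i.1)⁻¹) with hD'
  have hDD' : D * D' = 1 := by
    rw [hD, hD', Matrix.diagonal_mul_diagonal]
    have : (fun i : (g : Fin G) × Fin (L g) => a i.1 * (a i.1)⁻¹) = fun _ => (1:ℝ) :=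
      funext fun i => mul_inv_cancel₀ (ha i.1)
    rw [this, Matrix.diagonal_one]
  have key : UB G L a B = D * (1 + D' * Umat G L * B * Vmat G L) := by
    rw [Matrix.mul_add, mul_one, UB_decomp]
    congr 1
    simp only [← Matrix.mul_assoc]
    rw [hDD', Matrix.one_mul]
  rw [key, Matrix.det_mul]
  have swap : (1 + D' * Umat G L * B * Vmat G L).det
      = (1 + Vmat G L * (D' * Umat G L * B)).det := by
    rw [← Matrix.det_one_add_mul_comm (D' * Umat G L * B) (Vmat G L)]
  rw [swap]
  have hVDUB : Vmat G L * (D' * Umat G L * B)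
      = Matrix.diagonal (fun g => (L g : ℝ) * (a g)⁻¹) * B := by
    simp only [← Matrix.mul_assoc]
    rw [hD', VDU]
  rw [hVDUB]
  have factor : (1 : Matrix (Fin G) (Fin G) ℝ)
        + Matrix.diagonal (fun g => (L g : ℝ) * (a g)⁻¹) * B
      = Matrix.diagonal (fun g => (a g)⁻¹)
        * (Matrix.diagonal a + Matrix.diagonal (fun g => (L g : ℝ)) * B) := by
    rw [Matrix.mul_add, Matrix.diagonal_mul_diagonal, ← Matrix.mul_assoc,
      Matrix.diagonal_mul_diagonal]
    have e1 : (fun g => (a g)⁻¹ * a g) = fun _ : Fin G => (1:ℝ) :=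
      funext fun g => inv_mul_cancel₀ (ha g)
    have e2 : (fun g => (a g)⁻¹ * (L g : ℝ)) = fun g => (L g : ℝ) * (a g)⁻¹ :=
      funext fun g => mul_comm _ _
    rw [e1, e2, Matrix.diagonal_one]
  have trans_eq : (Matrix.diagonal a + Matrix.diagonal (fun g => (L g : ℝ)) * B).det
      = (Matrix.diagonal a + B * Matrix.diagonal (fun g => (L g : ℝ))).det := by
    rw [← Matrix.det_transpose]
    congr 1
    rw [Matrix.transpose_add, Matrix.transpose_mul, Matrix.diagonal_transpose,
      Matrix.diagonal_transpose, hB.eq]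
  rw [factor, Matrix.det_mul, Matrix.det_diagonal, Matrix.det_diagonal, trans_eq]
  have hprod : (∏ i : (g : Fin G) × Fin (L g), a i.1) = ∏ g, a g ^ L g := by
    rw [← Finset.univ_sigma_univ, Finset.prod_sigma]
    simp
  rw [hprod, ← mul_assoc]
  congr 1
  rw [← Finset.prod_mul_distrib]
  refine Finset.prod_congr rfl fun g _ => ?_
  have : L g - 1 + 1 = L g := Nat.sub_add_cancel (hL g)
  calc a g ^ L g * (a g)⁻¹ = a g ^ (L g - 1) * a g * (a g)⁻¹ := by
        rw [← pow_succ, this]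
    _ = a g ^ (L g - 1) := by
        rw [mul_assoc, mul_inv_cancel₀ (ha g), mul_one]

end aux

/-- Determinant of a uniform-block matrix:
`det N(A,B,ℓ) = (∏_g a_g^{L_g - 1}) · det(A + B L)`, where `L = diag(L_1, …, L_G)`. -/
theorem UB_det (G : ℕ) (L : Fin G → ℕ) (hL : ∀ g, 0 < L g)
    (a : Fin G → ℝ) (B : Matrix (Fin G) (Fin G) ℝ) (hB : B.IsSymm) :
    (UB G L a B).det =
      (∏ g, a g ^ (L g - 1)) *
        (Matrix.diagonal a + B * Matrix.diagonal (fun g => (L g : ℝ))).det := by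
  classical
  set f : ℝ → ℝ := fun t => (UB G L (fun g => a g + t) B).det with hf
  set h : ℝ → ℝ := fun t =>
      (∏ g, (a g + t) ^ (L g - 1)) *
        (Matrix.diagonal (fun g => a g + t)
          + B * Matrix.diagonal (fun g => (L g : ℝ))).det with hh
  have hfc : Continuous f := by
    apply Continuous.matrix_det
    apply continuous_matrix
    intro i j
    simp only [UB, Matrix.of_apply]
    by_cases hij : i = j <;> simp [hij] <;> fun_prop
  have hhc : Continuous h := by
    apply Continuous.mul
    · exact continuous_finset_prod _ fun g _ => by fun_prop
    · apply Continuous.matrix_det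
      apply continuous_matrix
      intro i j
      simp only [Matrix.add_apply, Matrix.diagonal_apply]
      by_cases hij : i = j <;> simp [hij] <;> fun_prop
  have hdense : Dense {t : ℝ | ∀ g, a g + t ≠ 0} := by
    have : {t : ℝ | ∀ g, a g + t ≠ 0} = (⋃ g, {-(a g)})ᶜ := by
      ext t
      simp only [Set.mem_setOf_eq, Set.mem_compl_iff, Set.mem_iUnion, Set.mem_singleton_iff,
        not_exists]
      constructor
      · intro hg g hg'; exact hg g (by rw [hg']; ring)
      · intro hg g hg'; exact hg g (by linarith)
    rw [this]
    exact Set.Countable.dense_compl ℝ ((Set.countable_iUnion fun g => Set.countable_singleton _))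
  have heq : f = h := by
    apply Continuous.ext_on hdense hfc hhc
    intro t ht
    exact UB_det_aux G L hL _ B hB ht
  have h0 := congrFun heq 0
  simp only [hf, hh, add_zero] at h0
  convert h0 using 3
end

section
/- Let N = N(A,B,ℓ) be a uniform-block matrix. The eigenvalues of N are: a_g with multiplicity L_g - 1 for each g = 1,...,G, together with the G eigenvalues of the matrix Δ = A + B L, where L = diag(L_1,...,L_G). -/
open Matrix BigOperators Polynomial

section aux
variable {G : ℕ} (L : Fin G → ℕ) (hL : ∀ g, 0 < L g)

/-- reindexing equivalence -/
def ubEquiv : ((g : Fin G) × Fin (L g)) ≃ (Fin G ⊕ ((g : Fin G) × Fin (L g - 1))) where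
  toFun x := if h : (x.2 : ℕ) = 0 then .inl x.1 else .inr ⟨x.1, ⟨(x.2 : ℕ) - 1, by
    have := x.2.isLt; omega⟩⟩
  invFun y := y.elim (fun g => ⟨g, ⟨0, hL g⟩⟩) (fun z => ⟨z.1, ⟨(z.2 : ℕ) + 1, by
    have := z.2.isLt; omega⟩⟩)
  left_inv x := by
    rcases x with ⟨g, i⟩
    by_cases h : (i : ℕ) = 0 <;> simp [h, Sigma.ext_iff]
    · exact (Fin.ext h.symm)
    · exact Fin.ext (by simp; omega)
  right_inv y := by
    rcases y with g | ⟨g, i⟩ <;> simp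

end aux

section aux2
variable {G : ℕ} (L : Fin G → ℕ) (hL : ∀ g, 0 < L g)
  (a : Fin G → ℝ) (B : Matrix (Fin G) (Fin G) ℝ)

/-- change of basis matrix: column `(h,0)` is the indicator of block `h`;
column `(h,j)` for `j ≠ 0` is the standard basis vector. -/
def ubP : Matrix ((g : Fin G) × Fin (L g)) ((g : Fin G) × Fin (L g)) ℝ :=
  Matrix.of fun x y => if (y.2 : ℕ) = 0 then (if x.1 = y.1 then 1 else 0)
    else (if x = y then 1 else 0)

def ubPinv : Matrix ((g : Fin G) × Fin (L g)) ((g : Fin G) × Fin (L g)) ℝ :=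
  Matrix.of fun x y => if (x.2 : ℕ) = 0 then (if x = y then 1 else 0)
    else (if x = y then 1 else 0) - (if (⟨x.1, ⟨0, hL x.1⟩⟩ : (g : Fin G) × Fin (L g)) = y then 1 else 0)

/-- the conjugated (block-triangular) matrix -/
def ubT : Matrix ((g : Fin G) × Fin (L g)) ((g : Fin G) × Fin (L g)) ℝ :=
  Matrix.of fun x y =>
    if (y.2 : ℕ) = 0 then
      (if (x.2 : ℕ) = 0 then (if x.1 = y.1 then a y.1 else 0) + B x.1 y.1 * (L y.1) else 0)
    else
      (if (x.2 : ℕ) = 0 then B x.1 y.1 else (if x = y then a y.1 else 0))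

end aux2

lemma charpoly_conj_aux {n R : Type*} [DecidableEq n] [Fintype n] [CommRing R]
    (P Q M : Matrix n n R) (h : Q * P = 1) : (Q * M * P).charpoly = M.charpoly := by
  have hmap : (Q.map C) * (P.map C) = 1 := by
    rw [← Matrix.map_mul, h, Matrix.map_one _ (map_zero C) (map_one C)]
  have comm : ∀ (A : Matrix n n R[X]), A * Matrix.scalar n (X : R[X]) = Matrix.scalar n X * A := by
    intro A; ext i j
    simp [scalar_apply, Matrix.mul_diagonal, Matrix.diagonal_mul, mul_comm]
  have key : charmatrix (Q * M * P) = Q.map C * charmatrix M * P.map C := by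
    unfold charmatrix
    rw [Matrix.mul_sub, Matrix.sub_mul]
    congr 1
    · rw [comm, mul_assoc, hmap, mul_one]
    · simp only [RingHom.mapMatrix_apply]
      rw [← Matrix.map_mul, ← Matrix.map_mul]
  rw [Matrix.charpoly, key, Matrix.det_mul, Matrix.det_mul, Matrix.charpoly]
  have hdet : (Q.map C).det * (P.map C).det = 1 := by
    rw [← Matrix.det_mul, hmap, Matrix.det_one]
  calc (Q.map C).det * (charmatrix M).det * (P.map C).det
      = (Q.map C).det * (P.map C).det * (charmatrix M).det := by ring
    _ = (charmatrix M).det := by rw [hdet, one_mul]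

section comp
variable {G : ℕ} (L : Fin G → ℕ) (hL : ∀ g, 0 < L g)
  (a : Fin G → ℝ) (B : Matrix (Fin G) (Fin G) ℝ)

lemma fst_eq_iff {x z : (g : Fin G) × Fin (L g)} (hx : (x.2 : ℕ) = 0) (hz : (z.2 : ℕ) = 0) :
    x.1 = z.1 ↔ x = z := by
  constructor
  · intro h
    rcases x with ⟨g, i⟩; rcases z with ⟨g', j⟩
    dsimp at h; subst h
    simp only [Sigma.mk.inj_iff, heq_eq_eq, true_and]
    exact Fin.ext (by simp at hx hz ⊢; omega)
  · intro h; rw [h]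

lemma ubPinv_mul_ubP : ubPinv L hL * ubP L = 1 := by
  ext x z
  rw [Matrix.mul_apply]
  by_cases hx : (x.2 : ℕ) = 0
  · have h1 : ∀ y, ubPinv L hL x y * ubP L y z = if x = y then ubP L y z else 0 := by
      intro y
      by_cases h : x = y
      · subst h; simp [ubPinv, hx]
      · simp [ubPinv, hx, h]
    rw [Finset.sum_congr rfl fun y _ => h1 y, Finset.sum_ite_eq]
    simp only [Finset.mem_univ, if_true]
    by_cases hz : (z.2 : ℕ) = 0
    · simp [ubP, hz, Matrix.one_apply, fst_eq_iff L hx hz]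
    · simp [ubP, hz, Matrix.one_apply]
  · have h1 : ∀ y, ubPinv L hL x y * ubP L y z =
        (if x = y then ubP L y z else 0) - (if (⟨x.1, ⟨0, hL x.1⟩⟩ : (g : Fin G) × Fin (L g)) = y then ubP L y z else 0) := by
      intro y
      simp only [ubPinv, Matrix.of_apply, hx, if_false, sub_mul, ite_mul, one_mul, zero_mul]
    rw [Finset.sum_congr rfl fun y _ => h1 y, Finset.sum_sub_distrib,
      Finset.sum_ite_eq, Finset.sum_ite_eq]
    simp only [Finset.mem_univ, if_true]
    by_cases hz : (z.2 : ℕ) = 0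
    · have hxz : x ≠ z := fun h => hx (h ▸ hz)
      simp [ubP, hz, Matrix.one_apply, hxz]
    · have hne : (⟨x.1, ⟨0, hL x.1⟩⟩ : (g : Fin G) × Fin (L g)) ≠ z := by
        intro h; apply hz; rw [← h]
      simp [ubP, hz, Matrix.one_apply, hne]
end comp

section comp2
variable {G : ℕ} (L : Fin G → ℕ) (hL : ∀ g, 0 < L g)
  (a : Fin G → ℝ) (B : Matrix (Fin G) (Fin G) ℝ)

lemma sum_sigma_ite (f : ((g : Fin G) × Fin (L g)) → ℝ) :
    ∑ z : (g : Fin G) × Fin (L g), (if (z.2 : ℕ) = 0 then f z else 0)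
      = ∑ g, f ⟨g, ⟨0, hL g⟩⟩ := by
  rw [← Finset.univ_sigma_univ, Finset.sum_sigma]
  refine Finset.sum_congr rfl fun g _ => ?_
  have h : ∀ i : Fin (L g), ((i : ℕ) = 0) ↔ (i = ⟨0, hL g⟩) := fun i => by
    rw [Fin.ext_iff]
  simp_rw [h]
  rw [Finset.sum_ite_eq' Finset.univ (⟨0, hL g⟩ : Fin (L g)) (fun i => f ⟨g, i⟩)]
  simp

end comp2

section comp3
variable {G : ℕ} (L : Fin G → ℕ) (hL : ∀ g, 0 < L g)
  (a : Fin G → ℝ) (B : Matrix (Fin G) (Fin G) ℝ)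

include hL in
lemma UB_mul_ubP : UB G L a B * ubP L = ubP L * ubT L a B := by
  ext x y
  rw [Matrix.mul_apply, Matrix.mul_apply]
  have lsplit : ∀ z, UB G L a B x z * ubP L z y =
      (if x = z then a x.1 * ubP L z y else 0) + B x.1 z.1 * ubP L z y := by
    intro z; by_cases h : x = z <;> simp [UB, h, add_mul]
  rw [Finset.sum_congr rfl fun z _ => lsplit z, Finset.sum_add_distrib, Finset.sum_ite_eq]
  simp only [Finset.mem_univ, if_true]
  by_cases hy : (y.2 : ℕ) = 0
  · -- right side
    have rterm : ∀ z, ubP L x z * ubT L a B z y =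
        (if (z.2 : ℕ) = 0 then
          (if x.1 = z.1 then 1 else 0) * ((if z.1 = y.1 then a y.1 else 0) + B z.1 y.1 * (L y.1))
        else 0) := by
      intro z; by_cases h : (z.2 : ℕ) = 0 <;> simp [ubP, ubT, h, hy]
    rw [Finset.sum_congr rfl fun z _ => rterm z, sum_sigma_ite L hL]
    have r2 : ∀ g : Fin G,
        (if x.1 = g then 1 else 0) * ((if g = y.1 then a y.1 else 0) + B g y.1 * (L y.1))
          = if x.1 = g then ((if g = y.1 then a y.1 else 0) + B g y.1 * (L y.1)) else 0 := by
      intro g; by_cases h : x.1 = g <;> simp [h]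
    rw [Finset.sum_congr rfl fun g _ => r2 g, Finset.sum_ite_eq]
    simp only [Finset.mem_univ, if_true]
    -- left side second sum
    have lterm : ∀ z : (g : Fin G) × Fin (L g), B x.1 z.1 * ubP L z y =
        if z.1 = y.1 then B x.1 y.1 else 0 := by
      intro z; by_cases h : z.1 = y.1 <;> simp [ubP, hy, h]
    rw [Finset.sum_congr rfl fun z _ => lterm z, ← Finset.univ_sigma_univ, Finset.sum_sigma]
    simp only [Finset.sum_const, Finset.card_univ, Fintype.card_fin, nsmul_eq_mul]
    rw [Finset.sum_eq_single y.1 (fun g _ hg => by simp [hg]) (by simp)]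
    simp only [if_pos rfl]
    by_cases h : x.1 = y.1 <;> simp [ubP, hy, h] <;> ring
  · -- y.2 ≠ 0
    have lterm : ∀ z : (g : Fin G) × Fin (L g), B x.1 z.1 * ubP L z y =
        if z = y then B x.1 y.1 else 0 := by
      intro z; by_cases h : z = y
      · subst h; simp [ubP, hy]
      · simp [ubP, hy, h]
    rw [Finset.sum_congr rfl fun z _ => lterm z,
      Finset.sum_ite_eq' Finset.univ y (fun _ => B x.1 y.1)]
    simp only [Finset.mem_univ, if_true]
    have rterm : ∀ z, ubP L x z * ubT L a B z y =
        (if (z.2 : ℕ) = 0 then (if x.1 = z.1 then 1 else 0) * B z.1 y.1 else 0)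
        + (if x = z then (if (z.2 : ℕ) = 0 then 0 else (if z = y then a y.1 else 0)) else 0) := by
      intro z
      by_cases h : (z.2 : ℕ) = 0 <;> by_cases h2 : x = z <;> simp [ubP, ubT, h, h2, hy]
    rw [Finset.sum_congr rfl fun z _ => rterm z, Finset.sum_add_distrib, sum_sigma_ite L hL,
      Finset.sum_ite_eq]
    simp only [Finset.mem_univ, if_true]
    have r2 : ∀ g : Fin G, (if x.1 = g then 1 else 0) * B g y.1
        = if x.1 = g then B x.1 y.1 else 0 := by
      intro g; by_cases h : x.1 = g
      · rw [if_pos h, if_pos h, one_mul, ← h]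
      · simp [h]
    rw [Finset.sum_congr rfl fun g _ => r2 g, Finset.sum_ite_eq]
    simp only [Finset.mem_univ, if_true]
    by_cases hx : (x.2 : ℕ) = 0
    · have hxy : x ≠ y := fun h => hy (h ▸ hx)
      simp [ubP, hx, hxy, hy]
    · by_cases hxy : x = y
      · subst hxy; simp [ubP, hx]; ring
      · simp [ubP, hx, hxy, hy]

def ubB' : Matrix (Fin G) ((g : Fin G) × Fin (L g - 1)) ℝ :=
  Matrix.of fun g0 z => B g0 z.1

def ubD : Matrix ((g : Fin G) × Fin (L g - 1)) ((g : Fin G) × Fin (L g - 1)) ℝ :=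
  Matrix.diagonal fun z => a z.1

lemma reindex_ubT :
    (Matrix.reindex (ubEquiv L hL) (ubEquiv L hL)) (ubT L a B) =
      Matrix.fromBlocks
        (Matrix.diagonal a + B * Matrix.diagonal (fun g => (L g : ℝ)))
        (ubB' L B) 0 (ubD L a) := by
  ext u v
  rcases u with g | ⟨g, i⟩ <;> rcases v with h | ⟨h, j⟩
  · by_cases hgh : g = h
    · subst hgh
      simp [ubEquiv, ubT, ubB', ubD, Matrix.mul_apply, Matrix.diagonal]
    · simp [ubEquiv, ubT, ubB', ubD, Matrix.mul_apply, Matrix.diagonal, hgh]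
  · simp [ubEquiv, ubT, ubB']
  · simp [ubEquiv, ubT]
  · by_cases hgh : g = h
    · subst hgh
      by_cases hij : i = j
      · subst hij
        simp [ubEquiv, ubT, ubD, Matrix.diagonal]
      · have h1 : (⟨g, ⟨(i : ℕ) + 1, by have := i.isLt; omega⟩⟩ : (g : Fin G) × Fin (L g)) ≠
            ⟨g, ⟨(j : ℕ) + 1, by have := j.isLt; omega⟩⟩ := by
          simp only [ne_eq, Sigma.mk.inj_iff, heq_eq_eq, true_and, Fin.mk.injEq]
          intro hc
          exact hij (Fin.ext (by omega))
        have h2 : (⟨g, i⟩ : (g : Fin G) × Fin (L g - 1)) ≠ ⟨g, j⟩ := by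
          simp [hij]
        simp [ubEquiv, ubT, ubD, Matrix.diagonal, h1, h2]
    · have h1 : (⟨g, ⟨(i : ℕ) + 1, by have := i.isLt; omega⟩⟩ : (g : Fin G) × Fin (L g)) ≠
          ⟨h, ⟨(j : ℕ) + 1, by have := j.isLt; omega⟩⟩ := by
        simp [hgh]
      have h2 : (⟨g, i⟩ : (g : Fin G) × Fin (L g - 1)) ≠ ⟨h, j⟩ := by
        simp [hgh]
      simp [ubEquiv, ubT, ubD, Matrix.diagonal, h1, h2]

lemma charpoly_diagonal_aux {n : Type*} [Fintype n] [DecidableEq n] (d : n → ℝ) :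
    (Matrix.diagonal d).charpoly = ∏ i, (X - C (d i)) := by
  unfold Matrix.charpoly
  have h : charmatrix (Matrix.diagonal d) = Matrix.diagonal (fun i => (X : ℝ[X]) - C (d i)) := by
    ext i j
    by_cases hij : i = j
    · subst hij; simp
    · simp [hij, Matrix.diagonal_apply_ne _ hij]
  rw [h, Matrix.det_diagonal]

end comp3

/-- Eigenvalue structure of a uniform-block matrix, expressed via the characteristic
polynomial: the eigenvalues of `N(A,B,ℓ)` are `a_g` with multiplicity `L_g - 1` for each
`g`, together with the `G` eigenvalues of `Δ = A + B L`, where `L = diag(L_1, …, L_G)`. -/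
theorem UB_charpoly (G : ℕ) (L : Fin G → ℕ) (hL : ∀ g, 0 < L g)
    (a : Fin G → ℝ) (B : Matrix (Fin G) (Fin G) ℝ) (hB : B.IsSymm) :
    (UB G L a B).charpoly =
      (∏ g, (Polynomial.X - Polynomial.C (a g)) ^ (L g - 1)) *
        (Matrix.diagonal a + B * Matrix.diagonal (fun g => (L g : ℝ))).charpoly := by
  have hPinvP : ubPinv L hL * ubP L = 1 := ubPinv_mul_ubP L hL
  have hT : ubPinv L hL * UB G L a B * ubP L = ubT L a B := by
    rw [Matrix.mul_assoc, UB_mul_ubP L hL a B, ← Matrix.mul_assoc, hPinvP, Matrix.one_mul]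
  have h1 : (UB G L a B).charpoly = (ubT L a B).charpoly := by
    rw [← hT]
    exact (charpoly_conj_aux (ubP L) (ubPinv L hL) _ hPinvP).symm
  rw [h1, ← Matrix.charpoly_reindex (ubEquiv L hL), reindex_ubT L hL a B,
    Matrix.charpoly_fromBlocks_zero₂₁, ubD, charpoly_diagonal_aux, mul_comm]
  congr 1
  rw [← Finset.univ_sigma_univ, Finset.prod_sigma]
  simp [Finset.prod_const]
end

section
/- A uniform-block matrix N(A,B,ℓ) with A = diag(a_1,...,a_G), B symmetric, and L = diag(L_1,...,L_G) is positive definite if and only if a_g > 0 for all g with L_g ≥ 2 and the G×G matrix Δ = A + B L has all eigenvalues positive (equivalently, L^{1/2}(A+BL)L^{-1/2} symmetrized is positive definite). -/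
open Matrix BigOperators Polynomial

/-! With `s_g = ∑_k x_{g,k}` the block sums of `x`, the quadratic form of `N(A,B,ℓ)` is
`∑_g a_g (∑_k x_{g,k}² - s_g²/L_g) + sᵀ (A L⁻¹ + B) s`. Each bracket is a nonnegative
within-block variance (Cauchy–Schwarz); it vanishes identically when `L_g = 1`, and for `L_g ≥ 2`
it can be made positive with `s = 0`. Hence `N(A,B,ℓ)` is positive definite iff `a_g > 0`
whenever `L_g ≥ 2` and `A L⁻¹ + B` is positive definite. Finally `Δ = (A L⁻¹ + B) L` has the
characteristic polynomial of the symmetric matrix `L^{1/2} (A L⁻¹ + B) L^{1/2}`, which is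
congruent to `A L⁻¹ + B`, so all its roots are real, and positive iff `A L⁻¹ + B` is positive
definite. -/

namespace Matrix

variable {n : Type*} [Fintype n] [DecidableEq n]

theorem IsHermitian.posDef_iff_forall_isRoot_charpoly_map {T : Matrix n n ℝ}
    (hT : T.IsHermitian) :
    T.PosDef ↔ ∀ μ : ℂ, (T.map (algebraMap ℝ ℂ)).charpoly.IsRoot μ → 0 < μ.re ∧ μ.im = 0 := by
  have hroots (μ : ℂ) :
      (T.map (algebraMap ℝ ℂ)).charpoly.IsRoot μ ↔ ∃ i, μ = hT.eigenvalues i := by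
    rw [charpoly_map, hT.charpoly_eq, Polynomial.map_prod, IsRoot, eval_prod,
      Finset.prod_eq_zero_iff]
    simp [sub_eq_zero]
  simp only [hT.posDef_iff_eigenvalues_pos, hroots, forall_exists_index, forall_eq_apply_imp_iff]
  simp

theorem charpoly_mul_diagonal_mul_self {R : Type*} [CommRing R] (S : Matrix n n R)
    (r : n → R) :
    (S * diagonal (fun i => r i * r i)).charpoly = (diagonal r * S * diagonal r).charpoly := by
  rw [← diagonal_mul_diagonal', ← Matrix.mul_assoc, charpoly_mul_comm, Matrix.mul_assoc]

theorem IsHermitian.posDef_iff_forall_isRoot_charpoly_map_mul_diagonal {S : Matrix n n ℝ}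
    (hS : S.IsHermitian) {d : n → ℝ} (hd : ∀ i, 0 < d i) :
    S.PosDef ↔ ∀ μ : ℂ,
      ((S * diagonal d).map (algebraMap ℝ ℂ)).charpoly.IsRoot μ → 0 < μ.re ∧ μ.im = 0 := by
  set r : n → ℝ := fun i => √(d i)
  have hd_eq : d = fun i => r i * r i := funext fun i => (Real.mul_self_sqrt (hd i).le).symm
  have hr : IsUnit (diagonal r) := by
    simp [r, isUnit_diagonal, Pi.isUnit_iff, fun i => (Real.sqrt_pos.2 (hd i)).ne']
  have hconj : (diagonal r * S * diagonal r).IsHermitian := by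
    simpa using isHermitian_conjTranspose_mul_mul (diagonal r) hS
  rw [charpoly_map, hd_eq, charpoly_mul_diagonal_mul_self, ← charpoly_map,
    ← hconj.posDef_iff_forall_isRoot_charpoly_map]
  have hstar : star (diagonal r) = diagonal r := by simp [star_eq_conjTranspose]
  nth_rw 2 [← hstar]
  rw [hr.posDef_star_right_conjugate_iff]

end Matrix

theorem Matrix.IsSymm.isHermitian_diagonal_add {n : Type*} [DecidableEq n] {B : Matrix n n ℝ}
    (hB : B.IsSymm) (d : n → ℝ) : (diagonal d + B).IsHermitian :=
  (isHermitian_diagonal d).add (by simpa using hB)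

theorem sq_sum_div_card_le_sum_sq {ι : Type*} [Fintype ι] (y : ι → ℝ) :
    (∑ i, y i) ^ 2 / Fintype.card ι ≤ ∑ i, y i ^ 2 := by
  rcases isEmpty_or_nonempty ι with _ | _
  · simp
  rw [div_le_iff₀' (by simp [Fintype.card_pos])]
  exact sq_sum_le_card_mul_sum_sq

theorem sum_sq_eq_sq_sum_div_card {ι : Type*} [Fintype ι] [Subsingleton ι] (y : ι → ℝ) :
    ∑ i, y i ^ 2 = (∑ i, y i) ^ 2 / Fintype.card ι := by
  rcases isEmpty_or_nonempty ι with _ | ⟨⟨i⟩⟩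
  · simp
  have := uniqueOfSubsingleton i
  simp

theorem dotProduct_mulVec_single_sub_single {n R : Type*} [Fintype n] [DecidableEq n]
    [CommRing R] (M : Matrix n n R) (p q : n) :
    (Pi.single p 1 - Pi.single q 1) ⬝ᵥ (M *ᵥ (Pi.single p 1 - Pi.single q 1))
      = M p p - M p q - M q p + M q q := by
  simp only [mulVec_sub, mulVec_single, MulOpposite.op_one, one_smul, dotProduct_sub,
    sub_dotProduct, single_dotProduct, col_apply, one_mul]
  ring

section UniformBlock

variable {G : ℕ} {L : Fin G → ℕ}

def blockSum (x : (Σ g, Fin (L g)) → ℝ) (g : Fin G) : ℝ := ∑ k, x ⟨g, k⟩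

theorem blockSum_sq_div_le_sum_sq (x : (Σ g, Fin (L g)) → ℝ) (g : Fin G) :
    blockSum x g ^ 2 / L g ≤ ∑ k, x ⟨g, k⟩ ^ 2 := by
  simpa [blockSum] using sq_sum_div_card_le_sum_sq fun k => x ⟨g, k⟩

theorem sum_sq_eq_blockSum_sq_div (x : (Σ g, Fin (L g)) → ℝ) {g : Fin G} (hg : L g ≤ 1) :
    ∑ k, x ⟨g, k⟩ ^ 2 = blockSum x g ^ 2 / L g := by
  have : Subsingleton (Fin (L g)) := Fin.subsingleton_iff_le_one.2 hg
  simpa [blockSum] using sum_sq_eq_sq_sum_div_card fun k => x ⟨g, k⟩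

variable {a : Fin G → ℝ} {B : Matrix (Fin G) (Fin G) ℝ}

theorem UB_isHermitian (hB : B.IsSymm) : (UB G L a B).IsHermitian := by
  ext i j
  by_cases h : i = j
  · simp [UB, h]
  · simp [UB, h, Ne.symm h, hB.apply]

theorem UB_mulVec_apply (x : (Σ g, Fin (L g)) → ℝ) (i : Σ g, Fin (L g)) :
    (UB G L a B *ᵥ x) i = a i.1 * x i + (B *ᵥ blockSum x) i.1 := by
  simp only [mulVec, dotProduct, UB, of_apply, add_mul, Finset.sum_add_distrib, ite_mul,
    zero_mul, Finset.sum_ite_eq, Finset.mem_univ, if_true, blockSum, Finset.mul_sum]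
  rw [← Finset.univ_sigma_univ, Finset.sum_sigma]

theorem dotProduct_UB_mulVec (x : (Σ g, Fin (L g)) → ℝ) :
    x ⬝ᵥ (UB G L a B *ᵥ x)
      = ∑ g, a g * ∑ k, x ⟨g, k⟩ ^ 2 + blockSum x ⬝ᵥ (B *ᵥ blockSum x) := by
  simp only [dotProduct, UB_mulVec_apply, mul_add, Finset.sum_add_distrib]
  rw [← Finset.univ_sigma_univ, Finset.sum_sigma, Finset.sum_sigma]
  congr 1
  · refine Finset.sum_congr rfl fun g _ => ?_
    rw [Finset.mul_sum]
    exact Finset.sum_congr rfl fun k _ => by ring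
  · simp only [blockSum, Finset.sum_mul]

theorem dotProduct_UB_mulVec_eq_sum_add_dotProduct (x : (Σ g, Fin (L g)) → ℝ) :
    x ⬝ᵥ (UB G L a B *ᵥ x)
      = ∑ g, a g * (∑ k, x ⟨g, k⟩ ^ 2 - blockSum x g ^ 2 / L g)
        + blockSum x ⬝ᵥ ((diagonal (fun g => a g / (L g : ℝ)) + B) *ᵥ blockSum x) := by
  rw [dotProduct_UB_mulVec, add_mulVec, dotProduct_add, ← add_assoc]
  congr 1
  simp only [dotProduct, mulVec_diagonal, ← Finset.sum_add_distrib]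
  exact Finset.sum_congr rfl fun g _ => by ring

theorem pos_of_UB_posDef (h : (UB G L a B).PosDef) {g : Fin G} (hg : 2 ≤ L g) : 0 < a g := by
  let p : Σ g, Fin (L g) := ⟨g, ⟨0, by omega⟩⟩
  let q : Σ g, Fin (L g) := ⟨g, ⟨1, by omega⟩⟩
  have hpq : p ≠ q := by simp [p, q]
  have hx : Pi.single p 1 - Pi.single q 1 ≠ (0 : (Σ g, Fin (L g)) → ℝ) := by
    intro h0
    simpa [hpq] using congrFun (sub_eq_zero.1 h0) p
  have := h.dotProduct_mulVec_pos hx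
  rw [star_trivial, dotProduct_mulVec_single_sub_single] at this
  simp [UB, p, q] at this
  linarith

theorem posDef_diagonal_div_add_of_UB_posDef (hL : ∀ g, 0 < L g) (hB : B.IsSymm)
    (h : (UB G L a B).PosDef) : (diagonal (fun g => a g / (L g : ℝ)) + B).PosDef := by
  refine .of_dotProduct_mulVec_pos (hB.isHermitian_diagonal_add _) fun v hv => ?_
  let x : (Σ g, Fin (L g)) → ℝ := fun i => v i.1 / L i.1
  have hL' (g : Fin G) : (L g : ℝ) ≠ 0 := by simp [(hL g).ne']
  have hsum : blockSum x = v := by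
    ext g
    simp [blockSum, x, mul_div_cancel₀ _ (hL' g)]
  have hx : x ≠ 0 := by
    intro h0
    apply hv
    rw [← hsum, h0]
    ext
    simp [blockSum]
  have hvar (g : Fin G) : ∑ k, x ⟨g, k⟩ ^ 2 - v g ^ 2 / L g = 0 := by
    simp [x]
    field_simp
    ring
  have := h.dotProduct_mulVec_pos hx
  rw [star_trivial, dotProduct_UB_mulVec_eq_sum_add_dotProduct, hsum] at this
  simpa [hvar] using this

theorem UB_posDef_of_pos_of_posDef (hB : B.IsSymm) (ha : ∀ g, 2 ≤ L g → 0 < a g)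
    (hS : (diagonal (fun g => a g / (L g : ℝ)) + B).PosDef) : (UB G L a B).PosDef := by
  refine .of_dotProduct_mulVec_pos (UB_isHermitian hB) fun x hx => ?_
  rw [star_trivial, dotProduct_UB_mulVec_eq_sum_add_dotProduct]
  have hterm_nonneg (g : Fin G) : 0 ≤ a g * (∑ k, x ⟨g, k⟩ ^ 2 - blockSum x g ^ 2 / L g) := by
    rcases le_or_gt (L g) 1 with hg | hg
    · simp [sum_sq_eq_blockSum_sq_div x hg]
    · exact mul_nonneg (ha g hg).le (sub_nonneg.2 (blockSum_sq_div_le_sum_sq x g))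
  have hquad_nonneg := hS.posSemidef.dotProduct_mulVec_nonneg (blockSum x)
  rw [star_trivial] at hquad_nonneg
  refine lt_of_le_of_ne (add_nonneg (Finset.sum_nonneg fun g _ => hterm_nonneg g) hquad_nonneg)
    fun h0 => hx ?_
  obtain ⟨hsum0, hquad0⟩ := (add_eq_zero_iff_of_nonneg
    (Finset.sum_nonneg fun g _ => hterm_nonneg g) hquad_nonneg).1 h0.symm
  have hs : blockSum x = 0 := by
    by_contra hs
    simpa [hquad0] using hS.dotProduct_mulVec_pos hs
  have hvar (g : Fin G) : ∑ k, x ⟨g, k⟩ ^ 2 - blockSum x g ^ 2 / L g = 0 := by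
    rcases le_or_gt (L g) 1 with hg | hg
    · exact sub_eq_zero.2 (sum_sq_eq_blockSum_sq_div x hg)
    · exact (mul_eq_zero.1 ((Finset.sum_eq_zero_iff_of_nonneg fun g _ => hterm_nonneg g).1
        hsum0 g (Finset.mem_univ g))).resolve_left (ha g hg).ne'
  ext ⟨g, k⟩
  have hsq : ∑ k, x ⟨g, k⟩ ^ 2 = 0 := by simpa [hs] using hvar g
  simpa using (Finset.sum_eq_zero_iff_of_nonneg fun k _ => sq_nonneg (x ⟨g, k⟩)).1 hsq k
    (Finset.mem_univ k)

theorem UB_posDef_iff_posDef_diagonal_div_add (hL : ∀ g, 0 < L g) (hB : B.IsSymm) :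
    (UB G L a B).PosDef ↔
      (∀ g, 2 ≤ L g → 0 < a g) ∧ (diagonal (fun g => a g / (L g : ℝ)) + B).PosDef :=
  ⟨fun h => ⟨fun _ => pos_of_UB_posDef h, posDef_diagonal_div_add_of_UB_posDef hL hB h⟩,
    fun h => UB_posDef_of_pos_of_posDef hB h.1 h.2⟩

end UniformBlock

/-- A uniform-block matrix `N(A,B,ℓ)` (with `A = diag(a_1,…,a_G)`, `B` symmetric,
`L = diag(L_1,…,L_G)`) is positive definite if and only if `a_g > 0` for all `g` with
`L_g ≥ 2` and the `G × G` matrix `Δ = A + B L` has all eigenvalues positive (i.e. every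
complex eigenvalue of `Δ` is a positive real number). -/
theorem UB_posDef_iff (G : ℕ) (L : Fin G → ℕ) (hL : ∀ g, 0 < L g)
    (a : Fin G → ℝ) (B : Matrix (Fin G) (Fin G) ℝ) (hB : B.IsSymm) :
    (UB G L a B).PosDef ↔
      (∀ g, 2 ≤ L g → 0 < a g) ∧
      (∀ μ : ℂ,
        (((Matrix.diagonal a + B * Matrix.diagonal (fun g => (L g : ℝ))).map
            (algebraMap ℝ ℂ)).charpoly.IsRoot μ) → 0 < μ.re ∧ μ.im = 0) := by
  have hL' (g : Fin G) : 0 < (L g : ℝ) := by exact_mod_cast hL g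
  have hΔ : diagonal a + B * diagonal (fun g => (L g : ℝ))
      = (diagonal (fun g => a g / (L g : ℝ)) + B) * diagonal (fun g => (L g : ℝ)) := by
    simp [add_mul, div_mul_cancel₀ _ (hL' _).ne']
  rw [UB_posDef_iff_posDef_diagonal_div_add hL hB, hΔ,
    (hB.isHermitian_diagonal_add _).posDef_iff_forall_isRoot_charpoly_map_mul_diagonal hL']
end

section
/- Let Υ = A_Υ ∘ I(ℓ) + B_Υ ∘ J(ℓ) be a uniform-block matrix and suppose I_R - Υ is invertible. Then the matrix Ω = (I_R - Υ)^2 is a uniform-block matrix Ω = A_Ω ∘ I(ℓ) + B_Ω ∘ J(ℓ) with A_Ω = (I_G - A_Υ)^2 and B_Ω = -2B_Υ + A_Υ B_Υ + B_Υ A_Υ + B_Υ L B_Υ, where L = diag(L_1,...,L_G). -/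
open Matrix BigOperators

/-- If `Υ = A_Υ ∘ I(ℓ) + B_Υ ∘ J(ℓ)` is a uniform-block matrix and `I_R - Υ` is
invertible, then `Ω = (I_R - Υ)²` is a uniform-block matrix with
`A_Ω = (I_G - A_Υ)²` and `B_Ω = -2 B_Υ + A_Υ B_Υ + B_Υ A_Υ + B_Υ L B_Υ`,
where `L = diag(L_1, …, L_G)`. -/
theorem UB_precision (G : ℕ) (L : Fin G → ℕ) (hL : ∀ g, 0 < L g)
    (aΥ : Fin G → ℝ) (BΥ : Matrix (Fin G) (Fin G) ℝ) (hBΥ : BΥ.IsSymm)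
    (hinv : IsUnit ((1 : Matrix ((g : Fin G) × Fin (L g)) ((g : Fin G) × Fin (L g)) ℝ)
        - UB G L aΥ BΥ).det) :
    ((1 : Matrix ((g : Fin G) × Fin (L g)) ((g : Fin G) × Fin (L g)) ℝ)
        - UB G L aΥ BΥ) ^ 2 =
      UB G L (fun g => (1 - aΥ g) ^ 2)
        (-(2 : ℝ) • BΥ + Matrix.diagonal aΥ * BΥ + BΥ * Matrix.diagonal aΥ +
          BΥ * Matrix.diagonal (fun g => (L g : ℝ)) * BΥ) := by
  have hM : ∀ i k : (g : Fin G) × Fin (L g),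
      ((1 : Matrix ((g : Fin G) × Fin (L g)) ((g : Fin G) × Fin (L g)) ℝ)
        - UB G L aΥ BΥ) i k
        = (if i = k then (1 - aΥ i.1) else 0) - BΥ i.1 k.1 := by
    intro i k
    simp only [Matrix.sub_apply, Matrix.one_apply, UB, Matrix.of_apply]
    split_ifs <;> ring
  ext i j
  rw [pow_two, Matrix.mul_apply]
  simp only [hM]
  simp only [sub_mul, mul_sub, Finset.sum_sub_distrib, ite_mul, mul_ite, zero_mul,
    mul_zero, Finset.sum_ite_eq, Finset.sum_ite_eq', Finset.mem_univ, if_true]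
  have hsum : ∑ k : (g : Fin G) × Fin (L g), BΥ i.1 k.1 * BΥ k.1 j.1
      = ∑ g : Fin G, BΥ i.1 g * (L g : ℝ) * BΥ g j.1 := by
    rw [← Finset.univ_sigma_univ, Finset.sum_sigma]
    simp [Finset.sum_const, nsmul_eq_mul]
    exact Finset.sum_congr rfl fun g _ => by ring
  rw [hsum]
  simp only [UB, Matrix.of_apply, Matrix.add_apply, Matrix.smul_apply, Matrix.neg_apply,
    smul_eq_mul, Matrix.mul_apply, Matrix.diagonal_apply, Finset.mul_sum,
    ite_mul, mul_ite, zero_mul, mul_zero, Finset.sum_ite_eq, Finset.sum_ite_eq',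
    Finset.mem_univ, if_true]
  have hBij : BΥ j.1 i.1 = BΥ i.1 j.1 := by
    rw [← hBΥ.apply]
  split_ifs with h
  · subst h; ring
  · ring
end

section
/- With Ω = A_Ω ∘ I(ℓ) + B_Ω ∘ J(ℓ) positive definite (A_Ω diagonal with positive entries, B_Ω symmetric), the inverse Σ = Ω^{-1} equals A_Σ ∘ I(ℓ) + B_Σ ∘ J(ℓ) with A_Σ = A_Ω^{-1} and B_Σ = -Δ_Ω^{-1} B_Ω A_Ω^{-1}, where Δ_Ω = A_Ω + B_Ω L and L = diag(L_1,...,L_G). -/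
open Matrix BigOperators

/-- If `Ω = A_Ω ∘ I(ℓ) + B_Ω ∘ J(ℓ)` is positive definite (with `A_Ω` diagonal with
positive entries and `B_Ω` symmetric), and `Δ_Ω = A_Ω + B_Ω L` is invertible, then
`Σ = Ω⁻¹ = A_Σ ∘ I(ℓ) + B_Σ ∘ J(ℓ)` with `A_Σ = A_Ω⁻¹` and `B_Σ = -Δ_Ω⁻¹ B_Ω A_Ω⁻¹`,
where `L = diag(L_1, …, L_G)`. -/
theorem UB_Sigma_of_Omega (G : ℕ) (L : Fin G → ℕ) (hL : ∀ g, 0 < L g)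
    (a : Fin G → ℝ) (B : Matrix (Fin G) (Fin G) ℝ) (hB : B.IsSymm)
    (ha : ∀ g, 0 < a g)
    (hpd : (UB G L a B).PosDef)
    (hΔ : IsUnit (Matrix.diagonal a + B * Matrix.diagonal (fun g => (L g : ℝ))).det) :
    (UB G L a B)⁻¹ =
      UB G L (fun g => (a g)⁻¹)
        (-((Matrix.diagonal a + B * Matrix.diagonal (fun g => (L g : ℝ)))⁻¹ * B *
            (Matrix.diagonal a)⁻¹)) := by
  set Δ := Matrix.diagonal a + B * Matrix.diagonal (fun g => (L g : ℝ)) with hΔdef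
  set B' := -(Δ⁻¹ * B * (Matrix.diagonal a)⁻¹) with hB'def
  have hΔΔ : Δ * Δ⁻¹ = 1 := Matrix.mul_nonsing_inv Δ hΔ
  have hainv : (Matrix.diagonal a)⁻¹ = Matrix.diagonal (fun g => (a g)⁻¹) := by
    apply Matrix.inv_eq_right_inv
    rw [Matrix.diagonal_mul_diagonal]
    have : (fun i => a i * (a i)⁻¹) = fun _ => (1 : ℝ) :=
      funext fun g => mul_inv_cancel₀ (ha g).ne'
    rw [this, Matrix.diagonal_one]
  have key : Matrix.diagonal a * B' + B * Matrix.diagonal (fun g => (L g : ℝ)) * B'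
      + B * (Matrix.diagonal a)⁻¹ = 0 := by
    have h1 : Δ * B' = -(B * (Matrix.diagonal a)⁻¹) := by
      rw [hB'def, Matrix.mul_neg, ← Matrix.mul_assoc, ← Matrix.mul_assoc, hΔΔ, one_mul]
    rw [← add_mul, ← hΔdef, h1]
    exact neg_add_cancel _
  have keyE : ∀ g h, a g * B' g h + (∑ g', B g g' * (L g' : ℝ) * B' g' h)
      + B g h * (a h)⁻¹ = 0 := by
    intro g h
    have := congrFun (congrFun key g) h
    simpa [Matrix.add_apply, Matrix.mul_apply, Matrix.diagonal_apply, hainv,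
      ite_mul, mul_ite, Finset.sum_ite_eq, Finset.sum_ite_eq'] using this
  apply Matrix.inv_eq_right_inv
  ext i j
  rw [Matrix.mul_apply]
  simp only [UB, Matrix.of_apply]
  have expand : ∀ k : (g : Fin G) × Fin (L g),
      ((if i = k then a i.1 else 0) + B i.1 k.1) *
        ((if k = j then (a k.1)⁻¹ else 0) + B' k.1 j.1) =
      (if i = k then a i.1 else 0) * (if k = j then (a k.1)⁻¹ else 0)
      + (if i = k then a i.1 * B' k.1 j.1 else 0)
      + (if k = j then B i.1 k.1 * (a k.1)⁻¹ else 0)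
      + B i.1 k.1 * B' k.1 j.1 := by
    intro k
    by_cases h1 : i = k <;> by_cases h2 : k = j <;> subst_vars <;> simp [*] <;> ring
  rw [Finset.sum_congr rfl (fun k _ => expand k)]
  rw [Finset.sum_add_distrib, Finset.sum_add_distrib, Finset.sum_add_distrib]
  have s1 : ∑ k : (g : Fin G) × Fin (L g),
      (if i = k then a i.1 else 0) * (if k = j then (a k.1)⁻¹ else 0)
      = if i = j then 1 else 0 := by
    rw [Finset.sum_eq_single i]
    · by_cases h : i = j
      · subst h; simp [mul_inv_cancel₀ (ha i.1).ne']
      · simp [h]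
    · intro k _ hk; simp [Ne.symm hk]
    · simp
  have s2 : ∑ k : (g : Fin G) × Fin (L g), (if i = k then a i.1 * B' k.1 j.1 else 0)
      = a i.1 * B' i.1 j.1 := by
    rw [Finset.sum_eq_single i] <;> simp +contextual [eq_comm]
  have s3 : ∑ k : (g : Fin G) × Fin (L g), (if k = j then B i.1 k.1 * (a k.1)⁻¹ else 0)
      = B i.1 j.1 * (a j.1)⁻¹ := by
    rw [Finset.sum_eq_single j] <;> simp +contextual
  have s4 : ∑ k : (g : Fin G) × Fin (L g), B i.1 k.1 * B' k.1 j.1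
      = ∑ g', B i.1 g' * (L g' : ℝ) * B' g' j.1 := by
    rw [← Finset.univ_sigma_univ, Finset.sum_sigma]
    simp [Finset.sum_const, mul_comm, mul_assoc, mul_left_comm]
  rw [s1, s2, s3, s4]
  have := keyE i.1 j.1
  rw [Matrix.one_apply]
  linarith
end

section
/- Let Ω = A_Ω ∘ I(ℓ) + B_Ω ∘ J(ℓ) be a positive definite uniform-block matrix with A_Ω = diag(a_{Ω,11},...,a_{Ω,GG}) and Δ_Ω = A_Ω + B_Ω L, L = diag(L_1,...,L_G). Then log det(Ω) = ∑_{g=1}^G (L_g - 1) log(a_{Ω,gg}) + log det(Δ_Ω). -/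
/-!
Splitting off the first index of every block turns `Ω` into a `2 × 2` block matrix. Adding, within
each block, the remaining columns to the first one and then subtracting the first row from the
remaining rows makes it block upper triangular, with diagonal blocks `Δ_Ω = A_Ω + B_Ω L` and
`diag(a_g)` repeated `L_g - 1` times. Hence `det Ω = ∏ a_g ^ (L_g - 1) * det Δ_Ω`, and positive
definiteness makes both factors nonzero, so the logarithm splits.
-/

open Matrix BigOperators

namespace Matrix

variable {R κ K : Type*} [CommRing R] [Fintype κ] [DecidableEq κ] [Fintype K] [DecidableEq K]

theorem det_fromBlocks_add_mul (A B : Matrix κ κ R) (X : Matrix κ K R) (Y : Matrix K κ R)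
    (D : Matrix K K R) (h : D * Y = Y * A) :
    (fromBlocks (A + B) (B * X) (Y * B) (D + Y * B * X)).det =
      (A + B * (1 + X * Y)).det * D.det := by
  have hreduce : fromBlocks 1 0 (-Y) 1 * fromBlocks (A + B) (B * X) (Y * B) (D + Y * B * X) *
      fromBlocks 1 0 Y 1 = fromBlocks (A + B * (1 + X * Y)) (B * X) 0 D := by
    simp only [fromBlocks_multiply, Matrix.one_mul, Matrix.mul_one, Matrix.zero_mul,
      Matrix.mul_zero, add_zero, zero_add, Matrix.neg_mul, Matrix.mul_add, Matrix.add_mul,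
      Matrix.mul_assoc, h]
    congr 1 <;> abel
  simpa [det_fromBlocks_zero₁₂, det_fromBlocks_zero₂₁] using congrArg det hreduce

end Matrix

section UniformBlock

variable {κ : Type*} {L : κ → ℕ}

def sigmaFinEquivSumSigma (hL : ∀ g, 0 < L g) :
    ((g : κ) × Fin (L g)) ≃ κ ⊕ (g : κ) × Fin (L g - 1) :=
  (Equiv.sigmaCongrRight fun g => (finCongr (Nat.sub_add_cancel (hL g)).symm).trans
      ((finSuccEquiv _).trans (Equiv.optionEquivSumPUnit.{0} _))).trans
    ((Equiv.sigmaSumDistrib _ _).trans ((Equiv.sumComm _ _).trans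
      (Equiv.sumCongr (Equiv.sigmaPUnit κ) (Equiv.refl _))))

theorem fst_sigmaFinEquivSumSigma_symm (hL : ∀ g, 0 < L g) (x : κ ⊕ (g : κ) × Fin (L g - 1)) :
    ((sigmaFinEquivSumSigma hL).symm x).1 = Sum.elim id Sigma.fst x := by
  rcases x with g | ⟨g, i⟩ <;> rfl

variable {R : Type*} [CommRing R] [Fintype κ] [DecidableEq κ]

theorem det_diagonal_add_submatrix_sigma_fst (hL : ∀ g, 0 < L g) (a : κ → R)
    (B : Matrix κ κ R) :
    (Matrix.diagonal (fun i : (g : κ) × Fin (L g) => a i.1) +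
        B.submatrix Sigma.fst Sigma.fst).det =
      (∏ g, a g ^ (L g - 1)) *
        (Matrix.diagonal a + B * Matrix.diagonal (fun g => (L g : R))).det := by
  set e := sigmaFinEquivSumSigma hL
  set P : Matrix ((g : κ) × Fin (L g - 1)) κ R := (1 : Matrix κ κ R).submatrix Sigma.fst id
  have hblocks : (Matrix.diagonal (fun i : (g : κ) × Fin (L g) => a i.1) +
      B.submatrix Sigma.fst Sigma.fst).submatrix e.symm e.symm =
      fromBlocks (Matrix.diagonal a + B) (B * Pᵀ) (P * B)
        (Matrix.diagonal (fun q => a q.1) + P * B * Pᵀ) := by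
    ext (g | q) (h | r) <;>
      simp [e, P, fst_sigmaFinEquivSumSigma_symm, diagonal_apply, mul_apply, one_apply]
  have hcomm :
      Matrix.diagonal (fun q : (g : κ) × Fin (L g - 1) => a q.1) * P = P * Matrix.diagonal a := by
    ext q g
    rw [diagonal_mul, mul_diagonal]
    by_cases hqg : q.1 = g <;> simp [P, one_apply, hqg]
  have hcount : 1 + Pᵀ * P = Matrix.diagonal (fun g => (L g : R)) := by
    ext g h
    simp only [P, Matrix.add_apply, mul_apply, transpose_apply, submatrix_apply, id, one_apply,
      Fintype.sum_sigma, diagonal_apply]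
    split_ifs with hgh
    · subst hgh; simp [Nat.cast_sub (hL g)]
    · simp [Ne.symm hgh]
  rw [← det_submatrix_equiv_self e.symm, hblocks, det_fromBlocks_add_mul _ _ _ _ _ hcomm, hcount,
    det_diagonal, Fintype.prod_sigma, mul_comm]
  simp

end UniformBlock

theorem UB_log_det_general (G : ℕ) (L : Fin G → ℕ) (hL : ∀ g, 0 < L g)
    (a : Fin G → ℝ) (B : Matrix (Fin G) (Fin G) ℝ)
    (hpd : (UB G L a B).PosDef) :
    Real.log (UB G L a B).det =
      (∑ g, ((L g : ℝ) - 1) * Real.log (a g)) +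
        Real.log (Matrix.diagonal a + B * Matrix.diagonal (fun g => (L g : ℝ))).det := by
  have hdet : (UB G L a B).det = (∏ g, a g ^ (L g - 1)) *
      (Matrix.diagonal a + B * Matrix.diagonal (fun g => (L g : ℝ))).det :=
    det_diagonal_add_submatrix_sigma_fst hL a B
  have hpos := hpd.det_pos
  rw [hdet] at hpos ⊢
  obtain ⟨hprod, hΔ⟩ := mul_ne_zero_iff.mp hpos.ne'
  rw [Real.log_mul hprod hΔ,
    Real.log_prod fun g _ => Finset.prod_ne_zero_iff.mp hprod g (Finset.mem_univ g)]
  simp [Real.log_pow, Nat.cast_sub (hL _)]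

/-- For a positive definite uniform-block matrix `Ω = A_Ω ∘ I(ℓ) + B_Ω ∘ J(ℓ)` with
`Δ_Ω = A_Ω + B_Ω L` and `L = diag(L_1, …, L_G)`:
`log det Ω = ∑_g (L_g - 1) log(a_{Ω,gg}) + log det(Δ_Ω)`. -/
theorem UB_log_det (G : ℕ) (L : Fin G → ℕ) (hL : ∀ g, 0 < L g)
    (a : Fin G → ℝ) (B : Matrix (Fin G) (Fin G) ℝ) (hB : B.IsSymm)
    (hpd : (UB G L a B).PosDef) :
    Real.log (UB G L a B).det =
      (∑ g, ((L g : ℝ) - 1) * Real.log (a g)) +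
        Real.log (Matrix.diagonal a + B * Matrix.diagonal (fun g => (L g : ℝ))).det :=
  UB_log_det_general G L hL a B hpd
end

section
/- Let a uniform-block matrix Υ have blocks Υ_{gg} = γ_{gg}(J_{L_g} - I_{L_g}) and Υ_{gg'} = γ_{gg'} J_{L_g×L_{g'}}. The eigenvalues of Υ are -γ_{gg} with multiplicity L_g - 1 for each g, plus the eigenvalues of the G×G matrix -A_Υ' + B_Υ L where A_Υ' = diag(γ_{11},...,γ_{GG}), B_Υ = (γ_{gg'}), L = diag(L_1,...,L_G). Consequently, Υ has all eigenvalues less than 1 in absolute value if |γ_{gg}| < 1 for all g and the spectral radius of the G×G matrix Δ_Υ = -A_Υ' + B_Υ L is less than 1. -/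
/-!
Write `Υ = D + P B Pᵀ`, where `D` is diagonal, constant on each block, and `P` is the
incidence matrix of the block decomposition (`P ⟨g, k⟩ h = [g = h]`), so that
`Pᵀ diag(e ∘ fst) P = diag(L_g e_g)`. For `x` off the finite set of diagonal values, factoring
out `x - D` and applying `det (1 - X Y) = det (1 - Y X)` turns `det (x - Υ)` into
`∏ (x + γ_g)^{L_g} det (1 - diag(L/(x + γ)) B)`, and the same manipulation on the `G × G` side
shows this is `∏ (x + γ_g)^{L_g - 1} det (x - Δ_Υ)`. Agreeing at infinitely many points, the two
characteristic polynomials are equal, and every eigenvalue of `Υ` is then either some `-γ_g` or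
an eigenvalue of `Δ_Υ`.
-/

open Matrix BigOperators Polynomial

namespace Matrix

section Incidence

variable {ι : Type*} [Fintype ι] [DecidableEq ι] (R : Type*) [CommRing R]
  (β : ι → Type*)

def sigmaIncidence : Matrix (Σ g, β g) ι R :=
  Matrix.of fun i g => if i.1 = g then 1 else 0

variable {R}

theorem sigmaIncidence_mul_mul_transpose (B : Matrix ι ι R) :
    sigmaIncidence R β * B * (sigmaIncidence R β)ᵀ = Matrix.of fun i j => B i.1 j.1 := by
  ext i j
  simp [sigmaIncidence, mul_apply, ite_mul, mul_ite]

theorem transpose_sigmaIncidence_mul_diagonal_mul [∀ g, Fintype (β g)]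
    [∀ g, DecidableEq (β g)] (d : ι → R) :
    (sigmaIncidence R β)ᵀ * diagonal (fun i : Σ g, β g => d i.1) * sigmaIncidence R β =
      diagonal fun g => (Fintype.card (β g) : R) * d g := by
  ext g g'
  rw [mul_apply, Fintype.sum_sigma]
  simp only [sigmaIncidence, mul_diagonal, transpose_apply, of_apply]
  by_cases h : g = g'
  · subst h
    simp [mul_comm]
  · simp [h, Ne.symm h]

end Incidence

section Determinant

variable {n : Type*} [Fintype n] [DecidableEq n] {K : Type*} [Field K]

theorem det_diagonal_sub {d : n → K} (hd : ∀ i, d i ≠ 0) (M : Matrix n n K) :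
    (diagonal d - M).det = (∏ i, d i) * (1 - diagonal d⁻¹ * M).det := by
  have hsplit : diagonal d - M = diagonal d * (1 - diagonal d⁻¹ * M) := by
    rw [Matrix.mul_sub, Matrix.mul_one, ← Matrix.mul_assoc, diagonal_mul_diagonal,
      show (fun i => d i * d⁻¹ i) = fun _ => 1 from funext fun i => mul_inv_cancel₀ (hd i),
      diagonal_one, Matrix.one_mul]
  rw [hsplit, det_mul, det_diagonal]

end Determinant

section BlockConstant

variable {ι : Type*} [Fintype ι] [DecidableEq ι] {β : ι → Type*} [∀ g, Fintype (β g)]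
  [∀ g, DecidableEq (β g)] {K : Type*} [Field K]

theorem det_diagonal_comp_fst_sub_sigma [∀ g, Nonempty (β g)] {d : ι → K} (hd : ∀ g, d g ≠ 0)
    (B : Matrix ι ι K) :
    (diagonal (fun i : Σ g, β g => d i.1) - Matrix.of fun i j : Σ g, β g => B i.1 j.1).det =
      (∏ g, d g ^ (Fintype.card (β g) - 1)) *
        (diagonal d - B * diagonal fun g => (Fintype.card (β g) : K)).det := by
  set P := sigmaIncidence K β
  set c : ι → K := fun g => Fintype.card (β g)
  have hsigma :
      (diagonal (fun i : Σ g, β g => d i.1) - Matrix.of fun i j : Σ g, β g => B i.1 j.1).det =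
        (∏ g, d g ^ Fintype.card (β g)) * (1 - diagonal (c * d⁻¹) * B).det := by
    rw [det_diagonal_sub (fun i : Σ g, β g => hd i.1), Fintype.prod_sigma,
      ← sigmaIncidence_mul_mul_transpose]
    congr 1
    · simp
    · calc (1 - diagonal (fun i : Σ g, β g => d i.1)⁻¹ * (P * B * Pᵀ)).det
          = (1 - Pᵀ * (diagonal (fun i : Σ g, β g => d⁻¹ i.1) * P * B)).det := by
            rw [det_one_sub_mul_comm Pᵀ]
            simp only [Matrix.mul_assoc]
            rfl
        _ = (1 - diagonal (c * d⁻¹) * B).det := by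
            rw [← Matrix.mul_assoc, ← Matrix.mul_assoc,
              transpose_sigmaIncidence_mul_diagonal_mul]
            rfl
  have hbase : (diagonal d - B * diagonal c).det =
      (∏ g, d g) * (1 - diagonal (c * d⁻¹) * B).det := by
    rw [det_diagonal_sub hd, ← Matrix.mul_assoc, det_one_sub_mul_comm, ← Matrix.mul_assoc,
      diagonal_mul_diagonal]
    rfl
  have hpow (g : ι) : d g ^ Fintype.card (β g) = d g ^ (Fintype.card (β g) - 1) * d g :=
    (pow_sub_one_mul Fintype.card_ne_zero _).symm
  rw [hsigma, hbase, Finset.prod_congr rfl fun g _ => hpow g, Finset.prod_mul_distrib, mul_assoc]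

theorem charpoly_diagonal_comp_fst_add_sigma [Infinite K] [∀ g, Nonempty (β g)] (a : ι → K)
    (B : Matrix ι ι K) :
    (diagonal (fun i : Σ g, β g => a i.1) + Matrix.of fun i j : Σ g, β g => B i.1 j.1).charpoly =
      (∏ g, (X - C (a g)) ^ (Fintype.card (β g) - 1)) *
        (diagonal a + B * diagonal fun g => (Fintype.card (β g) : K)).charpoly := by
  refine eq_of_infinite_eval_eq _ _ ((Set.finite_range a).infinite_compl.mono fun x hx => ?_)
  have hd (g : ι) : x - a g ≠ 0 := fun h => hx ⟨g, (sub_eq_zero.1 h).symm⟩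
  simp only [Set.mem_ofPred_eq, eval_mul, eval_charpoly, eval_prod, eval_pow, eval_sub, eval_X,
    eval_C, scalar_apply, sub_add_eq_sub_sub, diagonal_sub]
  exact det_diagonal_comp_fst_sub_sigma hd B

end BlockConstant

end Matrix

theorem Polynomial.eq_or_isRoot_of_isRoot_map_prod_mul {K L ι : Type*} [CommRing K]
    [CommRing L] [IsDomain L] [Fintype ι] (f : K →+* L) (a : ι → K) (k : ι → ℕ) (q : K[X]) {μ : L}
    (h : (((∏ g, (X - C (a g)) ^ k g) * q).map f).IsRoot μ) :
    (∃ g, μ = f (a g)) ∨ (q.map f).IsRoot μ := by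
  rw [IsRoot.def, Polynomial.map_mul, eval_mul, mul_eq_zero] at h
  refine h.imp (fun h => ?_) id
  simp only [Polynomial.map_prod, Polynomial.map_pow, Polynomial.map_sub, map_X, map_C,
    eval_prod, eval_pow, eval_sub, eval_X, eval_C, Finset.prod_eq_zero_iff, pow_eq_zero_iff',
    sub_eq_zero] at h
  obtain ⟨g, -, hμ, -⟩ := h
  exact ⟨g, hμ⟩

theorem UB_eq_diagonal_add (G : ℕ) (L : Fin G → ℕ) (a : Fin G → ℝ)
    (B : Matrix (Fin G) (Fin G) ℝ) :
    UB G L a B = diagonal (fun i => a i.1) + Matrix.of fun i j => B i.1 j.1 := by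
  ext i j
  simp [UB, diagonal_apply]

theorem charpoly_UB (G : ℕ) (L : Fin G → ℕ) (hL : ∀ g, 0 < L g) (a : Fin G → ℝ)
    (B : Matrix (Fin G) (Fin G) ℝ) :
    (UB G L a B).charpoly =
      (∏ g, (X - C (a g)) ^ (L g - 1)) *
        (diagonal a + B * diagonal fun g => (L g : ℝ)).charpoly := by
  have (g : Fin G) : Nonempty (Fin (L g)) := Fin.pos_iff_nonempty.1 (hL g)
  rw [UB_eq_diagonal_add]
  simpa only [Fintype.card_fin] using
    charpoly_diagonal_comp_fst_add_sigma (β := fun g => Fin (L g)) a B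

theorem UB_Upsilon_eigen_general (G : ℕ) (L : Fin G → ℕ) (hL : ∀ g, 0 < L g)
    (γd : Fin G → ℝ) (Bγ : Matrix (Fin G) (Fin G) ℝ) :
    ((UB G L (fun g => -(γd g)) Bγ).charpoly =
      (∏ g, (Polynomial.X + Polynomial.C (γd g)) ^ (L g - 1)) *
        (-Matrix.diagonal γd + Bγ * Matrix.diagonal (fun g => (L g : ℝ))).charpoly) ∧
    ((∀ g, |γd g| < 1) →
      (∀ μ : ℂ, (((-Matrix.diagonal γd + Bγ * Matrix.diagonal (fun g => (L g : ℝ))).map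
          (algebraMap ℝ ℂ)).charpoly.IsRoot μ) → ‖μ‖ < 1) →
      ∀ μ : ℂ, (((UB G L (fun g => -(γd g)) Bγ).map
          (algebraMap ℝ ℂ)).charpoly.IsRoot μ) → ‖μ‖ < 1) := by
  have hchar := charpoly_UB G L hL (fun g => -γd g) Bγ
  rw [← diagonal_neg] at hchar
  refine ⟨by simpa only [map_neg, sub_neg_eq_add] using hchar, fun hγ hΔ μ hμ => ?_⟩
  rw [charpoly_map, hchar] at hμ
  rcases Polynomial.eq_or_isRoot_of_isRoot_map_prod_mul _ _ _ _ hμ with ⟨g, rfl⟩ | hμ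
  · simpa using hγ g
  · exact hΔ μ (by rwa [charpoly_map])

/-- For the uniform-block matrix `Υ` with blocks `Υ_{gg} = γ_{gg}(J_{L_g} - I_{L_g})`
and `Υ_{gg'} = γ_{gg'} J`, the eigenvalues of `Υ` are `-γ_{gg}` with multiplicity
`L_g - 1`, together with the eigenvalues of `Δ_Υ = -A'_Υ + B_Υ L` where
`A'_Υ = diag(γ_{11}, …, γ_{GG})`, `B_Υ = (γ_{gg'})`, `L = diag(L_1, …, L_G)`
(expressed via characteristic polynomials). Consequently, `Υ` has all eigenvalues of
absolute value less than `1` if `|γ_{gg}| < 1` for all `g` and the spectral radius of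
`Δ_Υ` is less than `1`. -/
theorem UB_Upsilon_eigen (G : ℕ) (L : Fin G → ℕ) (hL : ∀ g, 0 < L g)
    (γd : Fin G → ℝ) (Bγ : Matrix (Fin G) (Fin G) ℝ) (hBγ : Bγ.IsSymm)
    (hdiag : ∀ g, Bγ g g = γd g) :
    ((UB G L (fun g => -(γd g)) Bγ).charpoly =
      (∏ g, (Polynomial.X + Polynomial.C (γd g)) ^ (L g - 1)) *
        (-Matrix.diagonal γd + Bγ * Matrix.diagonal (fun g => (L g : ℝ))).charpoly) ∧
    ((∀ g, |γd g| < 1) →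
      (∀ μ : ℂ, (((-Matrix.diagonal γd + Bγ * Matrix.diagonal (fun g => (L g : ℝ))).map
          (algebraMap ℝ ℂ)).charpoly.IsRoot μ) → ‖μ‖ < 1) →
      ∀ μ : ℂ, (((UB G L (fun g => -(γd g)) Bγ).map
          (algebraMap ℝ ℂ)).charpoly.IsRoot μ) → ‖μ‖ < 1) :=
  UB_Upsilon_eigen_general G L hL γd Bγ
end
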